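/- Let α, δ ∈ ℝ, β > 0, and let λ ≥ 0 satisfy λ = 0 if α² + 3βδ > 0 and λ > 2√(−(α² + 3βδ))/(3β) if α² + 3βδ ≤ 0. Set c₋ := (α − √(3β²λ² + α² + 3βδ))/(3β) and s(m) := √(3(m − α/(3β))² − (α² + 3βδ)/(3β²)) for m ≤ c₋. Then there exists a constant C > 0, depending only on α, β, δ, λ, such that for every measurable f : (0, ∞) → ℂ with ∫₀^∞ |f(x′)|² dx′ < ∞, one has ∫₀^∞ (∫_{−∞}^{c₋} e^{−x·s(m)} (∫₀^∞ e^{−x′·s(m)} |f(x′)| dx′) dm)² dx ≤ C ∫₀^∞ |f(x′)|² dx′. -/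

import Mathlib

/-!
For `m ≤ c₋` one has `s(m) ≥ √3 (c₋ - m)`, so `∫_{m < c₋} e^{-t s(m)} dm ≤ 1 / (√3 t)`. By Tonelli
the composed operator is therefore dominated by `1/√3` times the Hilbert operator
`g ↦ ∫₀^∞ g(y) / (x + y) dy` applied to `|f|`, and Schur's test with the weight `y^{-1/2}` bounds
the Hilbert operator on `L²(0, ∞)` by `π`. This gives `C = π² / 3`.
-/

open MeasureTheory

/-- `c₋ = (α − √(3β²λ² + α² + 3βδ))/(3β)`. -/
noncomputable def cMinus (α β δ lam : ℝ) : ℝ :=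
  (α - Real.sqrt (3 * β ^ 2 * lam ^ 2 + α ^ 2 + 3 * β * δ)) / (3 * β)

/-- `s(m) = √(3(m − α/(3β))² − (α² + 3βδ)/(3β²))`. -/
noncomputable def sHNLS (α β δ : ℝ) (m : ℝ) : ℝ :=
  Real.sqrt (3 * (m - α / (3 * β)) ^ 2 - (α ^ 2 + 3 * β * δ) / (3 * β ^ 2))

open Set Real
open scoped ENNReal

theorem ENNReal.rpow_inv_two_sq (t : ℝ≥0∞) : (t ^ (2⁻¹ : ℝ)) ^ 2 = t := by
  simpa using ENNReal.rpow_inv_natCast_pow two_ne_zero t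

theorem ENNReal.ofReal_integral_le_lintegral_ofReal {α : Type*} [MeasurableSpace α]
    {μ : Measure α} {f : α → ℝ} (hf : 0 ≤ᵐ[μ] f) :
    ENNReal.ofReal (∫ a, f a ∂μ) ≤ ∫⁻ a, ENNReal.ofReal (f a) ∂μ := by
  by_cases hfi : Integrable f μ
  · exact (ofReal_integral_eq_lintegral_ofReal hfi hf).le
  · simp [integral_undef hfi]

theorem lintegral_mul_sq_le {α : Type*} [MeasurableSpace α] {μ : Measure α}
    {f g : α → ℝ≥0∞} (hf : AEMeasurable f μ) (hg : AEMeasurable g μ) :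
    (∫⁻ a, f a * g a ∂μ) ^ 2 ≤ (∫⁻ a, f a ^ 2 ∂μ) * ∫⁻ a, g a ^ 2 ∂μ := by
  have h := ENNReal.lintegral_mul_le_Lp_mul_Lq μ Real.HolderConjugate.two_two hf hg
  simp only [ENNReal.rpow_two, one_div] at h
  calc (∫⁻ a, f a * g a ∂μ) ^ 2
      ≤ ((∫⁻ a, f a ^ 2 ∂μ) ^ (2⁻¹ : ℝ) * (∫⁻ a, g a ^ 2 ∂μ) ^ (2⁻¹ : ℝ)) ^ 2 := by
        gcongr; exact h
    _ = (∫⁻ a, f a ^ 2 ∂μ) * ∫⁻ a, g a ^ 2 ∂μ := by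
        rw [mul_pow, ENNReal.rpow_inv_two_sq, ENNReal.rpow_inv_two_sq]

theorem lintegral_mul_sq_le_of_weight {α : Type*} [MeasurableSpace α] {μ : Measure α}
    {k g w : α → ℝ≥0∞} (hk : AEMeasurable k μ) (hg : AEMeasurable g μ) (hw : AEMeasurable w μ)
    (hw0 : ∀ᵐ a ∂μ, w a ≠ 0) (hwt : ∀ᵐ a ∂μ, w a ≠ ⊤) :
    (∫⁻ a, k a * g a ∂μ) ^ 2 ≤
      (∫⁻ a, k a * w a ∂μ) * ∫⁻ a, k a * (g a ^ 2 * (w a)⁻¹) ∂μ := by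
  have hprod : (fun a => k a * g a) =ᵐ[μ]
      fun a => (k a * w a) ^ (2⁻¹ : ℝ) * (k a * (g a ^ 2 * (w a)⁻¹)) ^ (2⁻¹ : ℝ) := by
    filter_upwards [hw0, hwt] with a h0 ht
    rw [← ENNReal.mul_rpow_of_nonneg _ _ (by norm_num),
      show k a * w a * (k a * (g a ^ 2 * (w a)⁻¹)) = (k a * g a) ^ 2 * (w a * (w a)⁻¹) by ring,
      ENNReal.mul_inv_cancel h0 ht, mul_one]
    simpa using (ENNReal.pow_rpow_inv_natCast two_ne_zero (k a * g a)).symm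
  rw [lintegral_congr_ae hprod]
  refine (lintegral_mul_sq_le (f := fun a => (k a * w a) ^ (2⁻¹ : ℝ))
      (g := fun a => (k a * (g a ^ 2 * (w a)⁻¹)) ^ (2⁻¹ : ℝ))
      (by fun_prop) (by fun_prop)).trans_eq ?_
  simp_rw [ENNReal.rpow_inv_two_sq]

theorem lintegral_sq_lintegral_le_of_schur {X Y : Type*} [MeasurableSpace X] [MeasurableSpace Y]
    {μ : Measure X} {ν : Measure Y} [SFinite μ] [SFinite ν] {K : X → Y → ℝ≥0∞}
    (hK : Measurable (Function.uncurry K)) {p : Y → ℝ≥0∞} {q : X → ℝ≥0∞}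
    (hp : Measurable p) (hq : Measurable q) (hp0 : ∀ᵐ y ∂ν, p y ≠ 0) (hpt : ∀ᵐ y ∂ν, p y ≠ ⊤)
    {C₁ C₂ : ℝ≥0∞} (h₁ : ∀ᵐ x ∂μ, ∫⁻ y, K x y * p y ∂ν ≤ C₁ * q x)
    (h₂ : ∀ᵐ y ∂ν, ∫⁻ x, K x y * q x ∂μ ≤ C₂ * p y) {g : Y → ℝ≥0∞} (hg : Measurable g) :
    ∫⁻ x, (∫⁻ y, K x y * g y ∂ν) ^ 2 ∂μ ≤ C₁ * C₂ * ∫⁻ y, g y ^ 2 ∂ν := by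
  set w : Y → ℝ≥0∞ := fun y => g y ^ 2 * (p y)⁻¹
  have hw : Measurable w := by fun_prop
  have hKx : ∀ x, Measurable (K x) := fun x => hK.of_uncurry_left
  calc ∫⁻ x, (∫⁻ y, K x y * g y ∂ν) ^ 2 ∂μ
      ≤ ∫⁻ x, C₁ * (q x * ∫⁻ y, K x y * w y ∂ν) ∂μ := by
        refine lintegral_mono_ae (h₁.mono fun x hx => ?_)
        rw [← mul_assoc]
        exact (lintegral_mul_sq_le_of_weight (hKx x).aemeasurable hg.aemeasurable
          hp.aemeasurable hp0 hpt).trans (mul_le_mul_left hx _)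
    _ = C₁ * ∫⁻ x, ∫⁻ y, q x * (K x y * w y) ∂ν ∂μ := by
        rw [lintegral_const_mul]
        · congr 1
          exact lintegral_congr fun x => (lintegral_const_mul _ ((hKx x).mul hw)).symm
        · exact hq.mul (Measurable.lintegral_prod_right' (hK.mul (hw.comp measurable_snd)))
    _ = C₁ * ∫⁻ y, w y * ∫⁻ x, K x y * q x ∂μ ∂ν := by
        rw [lintegral_lintegral_swap (by fun_prop)]
        congr 1
        refine lintegral_congr fun y => ?_
        have hm : Measurable fun x => K x y * q x := hK.of_uncurry_right.mul hq
        rw [← lintegral_const_mul _ hm]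
        exact lintegral_congr fun x => by ring
    _ ≤ C₁ * ∫⁻ y, w y * (C₂ * p y) ∂ν := by
        gcongr C₁ * ?_
        exact lintegral_mono_ae (h₂.mono fun y hy => mul_le_mul_right hy _)
    _ = C₁ * C₂ * ∫⁻ y, g y ^ 2 ∂ν := by
        rw [mul_assoc, ← lintegral_const_mul _ (hg.pow_const 2)]
        congr 1
        refine lintegral_congr_ae ?_
        filter_upwards [hp0, hpt] with y h0 ht
        rw [show w y * (C₂ * p y) = C₂ * g y ^ 2 * ((p y)⁻¹ * p y) by ring,
          ENNReal.inv_mul_cancel h0 ht, mul_one]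

theorem lintegral_Ioi_inv_one_add_sq :
    ∫⁻ t in Ioi (0 : ℝ), ENNReal.ofReal (1 + t ^ 2)⁻¹ = ENNReal.ofReal (π / 2) := by
  rw [← ofReal_integral_eq_lintegral_ofReal integrable_inv_one_add_sq.integrableOn
    (ae_of_all _ fun t => by positivity), integral_Ioi_inv_one_add_sq, arctan_zero, sub_zero]

theorem lintegral_Ioi_inv_add_mul_inv_sqrt {x : ℝ} (hx : 0 < x) :
    ∫⁻ y in Ioi 0, ENNReal.ofReal (x + y)⁻¹ * ENNReal.ofReal (√y)⁻¹ =
      ENNReal.ofReal π * ENNReal.ofReal (√x)⁻¹ := by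
  have himage : (fun t : ℝ => x * t ^ 2) '' Ioi 0 = Ioi 0 := by
    ext u
    constructor
    · rintro ⟨t, ht, rfl⟩
      exact mul_pos hx (pow_pos ht 2)
    · intro hu
      refine ⟨√(u / x), Real.sqrt_pos.2 (div_pos hu hx), ?_⟩
      show x * √(u / x) ^ 2 = u
      rw [Real.sq_sqrt (div_pos hu hx).le, mul_div_cancel₀ _ hx.ne']
  have hinj : InjOn (fun t : ℝ => x * t ^ 2) (Ioi 0) := fun t ht t' ht' h =>
    (pow_left_inj₀ (le_of_lt ht) (le_of_lt ht') two_ne_zero).1 (mul_left_cancel₀ hx.ne' h)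
  have hderiv : ∀ t ∈ Ioi (0 : ℝ),
      HasDerivWithinAt (fun t : ℝ => x * t ^ 2) (x * (2 * t)) (Ioi 0) t :=
    fun t _ => by simpa using ((hasDerivAt_pow 2 t).const_mul x).hasDerivWithinAt
  rw [← himage, lintegral_image_eq_lintegral_abs_deriv_mul measurableSet_Ioi hderiv hinj]
  calc ∫⁻ t in Ioi 0, ENNReal.ofReal |x * (2 * t)| *
        (ENNReal.ofReal (x + x * t ^ 2)⁻¹ * ENNReal.ofReal (√(x * t ^ 2))⁻¹)
      = ∫⁻ t in Ioi 0, ENNReal.ofReal (2 * (√x)⁻¹) * ENNReal.ofReal (1 + t ^ 2)⁻¹ := by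
        refine setLIntegral_congr_fun measurableSet_Ioi fun t (ht : 0 < t) => ?_
        have hsx : 0 < √x := Real.sqrt_pos.2 hx
        rw [← ENNReal.ofReal_mul (by positivity), ← ENNReal.ofReal_mul (by positivity),
          ← ENNReal.ofReal_mul (by positivity), Real.sqrt_mul hx.le, Real.sqrt_sq ht.le,
          abs_of_pos (by positivity)]
        congr 1
        field_simp
    _ = ENNReal.ofReal π * ENNReal.ofReal (√x)⁻¹ := by
        rw [lintegral_const_mul _ (by fun_prop), lintegral_Ioi_inv_one_add_sq,
          ← ENNReal.ofReal_mul (by positivity), ← ENNReal.ofReal_mul (by positivity)]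
        ring_nf

/-- Hilbert's inequality on `(0, ∞)`, with its sharp constant `π`. -/
theorem lintegral_Ioi_sq_lintegral_inv_add_le {g : ℝ → ℝ≥0∞} (hg : Measurable g) :
    ∫⁻ x in Ioi 0, (∫⁻ y in Ioi 0, ENNReal.ofReal (x + y)⁻¹ * g y) ^ 2 ≤
      ENNReal.ofReal π ^ 2 * ∫⁻ y in Ioi 0, g y ^ 2 := by
  have hweight : ∀ᵐ x ∂(volume.restrict (Ioi (0 : ℝ))),
      ∫⁻ y in Ioi 0, ENNReal.ofReal (x + y)⁻¹ * ENNReal.ofReal (√y)⁻¹ ≤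
        ENNReal.ofReal π * ENNReal.ofReal (√x)⁻¹ := by
    filter_upwards [ae_restrict_mem measurableSet_Ioi] with x hx
    exact (lintegral_Ioi_inv_add_mul_inv_sqrt hx).le
  rw [sq]
  refine lintegral_sq_lintegral_le_of_schur (by fun_prop) (by fun_prop) (by fun_prop) ?_
    (ae_of_all _ fun _ => ENNReal.ofReal_ne_top) hweight ?_ hg
  · filter_upwards [ae_restrict_mem measurableSet_Ioi] with y (hy : 0 < y)
    simpa using hy
  · simpa only [add_comm] using hweight

theorem lintegral_Iio_exp_neg_mul_sub {a c : ℝ} (hc : 0 < c) :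
    ∫⁻ m in Iio a, ENNReal.ofReal (exp (-(c * (a - m)))) = ENNReal.ofReal c⁻¹ := by
  have hsplit : ∀ m, exp (-(c * (a - m))) = exp (-(c * a)) * exp (c * m) := fun m => by
    rw [← exp_add]; ring_nf
  simp_rw [hsplit, ENNReal.ofReal_mul (exp_pos _).le]
  rw [lintegral_const_mul _ (by fun_prop), setLIntegral_congr Iio_ae_eq_Iic,
    ← ofReal_integral_eq_lintegral_ofReal (integrableOn_exp_mul_Iic hc a)
      (ae_of_all _ fun _ => (exp_pos _).le), integral_exp_mul_Iic hc,
    ← ENNReal.ofReal_mul (exp_pos _).le, mul_div, ← exp_add, neg_add_cancel, exp_zero, one_div]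

theorem ofReal_integral_exp_mul_integral_exp_le {ρ : Measure ℝ} [SFinite ρ] {s : ℝ → ℝ}
    (hs : Measurable s) {κ : ℝ≥0∞}
    (hκ : ∀ t > 0, ∫⁻ m, ENNReal.ofReal (exp (-(t * s m))) ∂ρ ≤ κ * ENNReal.ofReal t⁻¹)
    {g : ℝ → ℝ} (hg : Measurable g) (hg0 : ∀ y, 0 ≤ g y) {x : ℝ} (hx : 0 < x) :
    ENNReal.ofReal (∫ m, exp (-(x * s m)) * (∫ y in Ioi 0, exp (-(y * s m)) * g y) ∂ρ) ≤
      κ * ∫⁻ y in Ioi 0, ENNReal.ofReal (x + y)⁻¹ * ENNReal.ofReal (g y) := by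
  calc ENNReal.ofReal (∫ m, exp (-(x * s m)) * (∫ y in Ioi 0, exp (-(y * s m)) * g y) ∂ρ)
      ≤ ∫⁻ m, ENNReal.ofReal (exp (-(x * s m))) *
          (∫⁻ y in Ioi 0, ENNReal.ofReal (exp (-(y * s m)) * g y)) ∂ρ := by
        refine (ENNReal.ofReal_integral_le_lintegral_ofReal
          (ae_of_all _ fun m => mul_nonneg (exp_pos _).le
            (integral_nonneg fun y => mul_nonneg (exp_pos _).le (hg0 y)))).trans
          (lintegral_mono fun m => ?_)
        rw [ENNReal.ofReal_mul (exp_pos _).le]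
        gcongr
        exact ENNReal.ofReal_integral_le_lintegral_ofReal
          (ae_of_all _ fun y => mul_nonneg (exp_pos _).le (hg0 y))
    _ = ∫⁻ m, (∫⁻ y in Ioi 0,
          ENNReal.ofReal (exp (-((x + y) * s m))) * ENNReal.ofReal (g y)) ∂ρ := by
        refine lintegral_congr fun m => ?_
        rw [← lintegral_const_mul _ (by fun_prop)]
        refine lintegral_congr fun y => ?_
        rw [← ENNReal.ofReal_mul (exp_pos _).le, ← ENNReal.ofReal_mul (exp_pos _).le,
          ← mul_assoc, ← exp_add]
        ring_nf
    _ = ∫⁻ y in Ioi 0, (∫⁻ m, ENNReal.ofReal (exp (-((x + y) * s m))) ∂ρ) *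
          ENNReal.ofReal (g y) := by
        rw [lintegral_lintegral_swap (by fun_prop)]
        refine lintegral_congr fun y => lintegral_mul_const _
          (by fun_prop : Measurable fun m => ENNReal.ofReal (exp (-((x + y) * s m))))
    _ ≤ ∫⁻ y in Ioi 0, κ * ENNReal.ofReal (x + y)⁻¹ * ENNReal.ofReal (g y) :=
        setLIntegral_mono' measurableSet_Ioi fun y (hy : 0 < y) =>
          mul_le_mul_left (hκ _ (by positivity)) _
    _ = κ * ∫⁻ y in Ioi 0, ENNReal.ofReal (x + y)⁻¹ * ENNReal.ofReal (g y) := by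
        rw [← lintegral_const_mul _ (by fun_prop)]
        simp_rw [mul_assoc]

theorem sqrt_three_mul_sub_le_sHNLS {α β δ lam m : ℝ} (hβ : 0 < β)
    (hm : m ≤ cMinus α β δ lam) :
    √3 * (cMinus α β δ lam - m) ≤ sHNLS α β δ m := by
  set S := √(3 * β ^ 2 * lam ^ 2 + α ^ 2 + 3 * β * δ) with hS
  set u := cMinus α β δ lam - m
  have hu : 0 ≤ u := sub_nonneg.2 hm
  have hPS : α ^ 2 + 3 * β * δ ≤ S ^ 2 := by
    rcases le_or_gt 0 (3 * β ^ 2 * lam ^ 2 + α ^ 2 + 3 * β * δ) with hD | hD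
    · rw [hS, Real.sq_sqrt hD]; nlinarith [sq_nonneg (β * lam)]
    · nlinarith [sq_nonneg (β * lam), sq_nonneg S]
  have hshift : m - α / (3 * β) = -(u + S / (3 * β)) := by
    have hc : cMinus α β δ lam = (α - S) / (3 * β) := rfl
    simp only [u, hc]; ring
  have hexpand : 3 * (m - α / (3 * β)) ^ 2 - (α ^ 2 + 3 * β * δ) / (3 * β ^ 2)
      = 3 * u ^ 2 + (2 * u * S / β + (S ^ 2 - (α ^ 2 + 3 * β * δ)) / (3 * β ^ 2)) := by
    rw [hshift]; field_simp; ring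
  calc √3 * u = √(3 * u ^ 2) := by rw [Real.sqrt_mul (by norm_num), Real.sqrt_sq hu]
    _ ≤ sHNLS α β δ m := by
      refine Real.sqrt_le_sqrt ?_
      rw [hexpand, le_add_iff_nonneg_right]
      have : 0 ≤ S ^ 2 - (α ^ 2 + 3 * β * δ) := by linarith
      positivity

theorem lintegral_Iio_cMinus_exp_neg_mul_sHNLS_le {α β δ lam t : ℝ} (hβ : 0 < β) (ht : 0 < t) :
    ∫⁻ m in Iio (cMinus α β δ lam), ENNReal.ofReal (exp (-(t * sHNLS α β δ m))) ≤
      ENNReal.ofReal (√3)⁻¹ * ENNReal.ofReal t⁻¹ := by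
  calc ∫⁻ m in Iio (cMinus α β δ lam), ENNReal.ofReal (exp (-(t * sHNLS α β δ m)))
      ≤ ∫⁻ m in Iio (cMinus α β δ lam),
          ENNReal.ofReal (exp (-(√3 * t * (cMinus α β δ lam - m)))) := by
        refine setLIntegral_mono (by fun_prop) fun m hm =>
          ENNReal.ofReal_le_ofReal (exp_le_exp.2 (neg_le_neg ?_))
        rw [mul_right_comm, mul_comm]
        exact mul_le_mul_of_nonneg_left (sqrt_three_mul_sub_le_sHNLS hβ (le_of_lt hm)) ht.le
    _ = ENNReal.ofReal (√3)⁻¹ * ENNReal.ofReal t⁻¹ := by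
        rw [lintegral_Iio_exp_neg_mul_sub (by positivity), mul_inv,
          ENNReal.ofReal_mul (by positivity)]

theorem composed_laplace_L2_bound_general (α β δ : ℝ) (hβ : 0 < β) (lam : ℝ) :
    ∃ C > 0, ∀ f : ℝ → ℂ, Measurable f →
      (∫⁻ x in Set.Ioi (0 : ℝ), ENNReal.ofReal (‖f x‖ ^ 2) < ⊤) →
      (∫⁻ x in Set.Ioi (0 : ℝ),
          ENNReal.ofReal
            ((∫ m in Set.Iio (cMinus α β δ lam),
                Real.exp (-(x * sHNLS α β δ m)) *
                  (∫ x' in Set.Ioi (0 : ℝ), Real.exp (-(x' * sHNLS α β δ m)) * ‖f x'‖)) ^ 2)) ≤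
        ENNReal.ofReal C *
          ∫⁻ x' in Set.Ioi (0 : ℝ), ENNReal.ofReal (‖f x'‖ ^ 2) := by
  refine ⟨π ^ 2 / 3, by positivity, fun f hf _ => ?_⟩
  have hs : Measurable (sHNLS α β δ) := by unfold sHNLS; fun_prop
  calc _ ≤ ∫⁻ x in Ioi 0, (ENNReal.ofReal (√3)⁻¹ *
            ∫⁻ y in Ioi 0, ENNReal.ofReal (x + y)⁻¹ * ENNReal.ofReal ‖f y‖) ^ 2 := by
        refine setLIntegral_mono' measurableSet_Ioi fun x (hx : 0 < x) => ?_
        rw [ENNReal.ofReal_pow (integral_nonneg fun m => mul_nonneg (exp_pos _).le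
          (integral_nonneg fun y => mul_nonneg (exp_pos _).le (norm_nonneg _)))]
        gcongr
        exact ofReal_integral_exp_mul_integral_exp_le hs
          (fun t ht => lintegral_Iio_cMinus_exp_neg_mul_sHNLS_le hβ ht) hf.norm
          (fun _ => norm_nonneg _) hx
    _ ≤ ENNReal.ofReal (√3)⁻¹ ^ 2 *
          (ENNReal.ofReal π ^ 2 * ∫⁻ y in Ioi 0, ENNReal.ofReal ‖f y‖ ^ 2) := by
        simp_rw [mul_pow]
        rw [lintegral_const_mul' _ _ (by simp)]
        gcongr
        exact lintegral_Ioi_sq_lintegral_inv_add_le hf.norm.ennreal_ofReal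
    _ = ENNReal.ofReal (π ^ 2 / 3) * ∫⁻ y in Ioi 0, ENNReal.ofReal (‖f y‖ ^ 2) := by
        have hconst : ENNReal.ofReal (√3)⁻¹ ^ 2 * ENNReal.ofReal π ^ 2 =
            ENNReal.ofReal (π ^ 2 / 3) := by
          rw [← ENNReal.ofReal_pow (by positivity), ← ENNReal.ofReal_pow pi_pos.le,
            ← ENNReal.ofReal_mul (by positivity), inv_pow, sq_sqrt (by norm_num), div_eq_inv_mul]
        rw [← mul_assoc, hconst]
        exact congrArg _ (lintegral_congr fun y => (ENNReal.ofReal_pow (norm_nonneg _) 2).symm)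

/-- `L²`-bound for the composed Laplace-type kernel:
`∫₀^∞ (∫_{−∞}^{c₋} e^{−x·s(m)} (∫₀^∞ e^{−x′·s(m)} |f(x′)| dx′) dm)² dx ≤ C ∫₀^∞ |f(x′)|² dx′`. -/
theorem composed_laplace_L2_bound (α β δ : ℝ) (hβ : 0 < β) (lam : ℝ)
    (hlam0 : 0 ≤ lam)
    (hlam1 : 0 < α ^ 2 + 3 * β * δ → lam = 0)
    (hlam2 : α ^ 2 + 3 * β * δ ≤ 0 →
      2 * Real.sqrt (-(α ^ 2 + 3 * β * δ)) / (3 * β) < lam) :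
    ∃ C > 0, ∀ f : ℝ → ℂ, Measurable f →
      (∫⁻ x in Set.Ioi (0 : ℝ), ENNReal.ofReal (‖f x‖ ^ 2) < ⊤) →
      (∫⁻ x in Set.Ioi (0 : ℝ),
          ENNReal.ofReal
            ((∫ m in Set.Iio (cMinus α β δ lam),
                Real.exp (-(x * sHNLS α β δ m)) *
                  (∫ x' in Set.Ioi (0 : ℝ), Real.exp (-(x' * sHNLS α β δ m)) * ‖f x'‖)) ^ 2)) ≤
        ENNReal.ofReal C *
          ∫⁻ x' in Set.Ioi (0 : ℝ), ENNReal.ofReal (‖f x'‖ ^ 2) :=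
  composed_laplace_L2_bound_general α β δ hβ lam
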